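/- arXiv:2206.15439 — 6 statements merged into one kernel-verified Lean document; each statement's English description precedes it below -/
import Mathlib

section
/- For any connected graph G with n ≥ 2 vertices, the outer-connected domination number of the middle graph M(G) satisfies ⌈n/2⌉ ≤ γ̃_c(M(G)) ≤ n. -/
/-!
The vertices of `G` form an outer-connected dominating set of `M(G)`: every edge contains a
vertex, and deleting the vertices leaves the line graph of `G`, which is connected as soon as `G`
is connected and has an edge. Conversely, an element of `M(G)` dominates at most two vertices of
`G` (a vertex only itself, an edge its two ends), so every dominating set of `M(G)` has at least
`n / 2` elements.
-/

open SimpleGraph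

/-- `S` is a dominating set of `H`: every vertex is in `S` or adjacent to a vertex of `S`. -/
def IsDomSet {V : Type*} (H : SimpleGraph V) (S : Set V) : Prop :=
  ∀ v : V, ∃ u ∈ S, u = v ∨ H.Adj u v

/-- The connected domination number: minimum size of a dominating set inducing a
connected subgraph. -/
noncomputable def connDomNum {V : Type*} (H : SimpleGraph V) : ℕ :=
  sInf {k | ∃ S : Set V, IsDomSet H S ∧ (H.induce S).Connected ∧ S.ncard = k}

/-- The outer-connected domination number: minimum size of a dominating set whose
complement induces a connected subgraph. -/
noncomputable def outConnDomNum {V : Type*} (H : SimpleGraph V) : ℕ :=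
  sInf {k | ∃ S : Set V, IsDomSet H S ∧ (H.induce Sᶜ).Connected ∧ S.ncard = k}

/-- The middle graph `M(G)`: vertices are `V(G) ∪ E(G)`; a vertex is adjacent to its
incident edges, and two edges are adjacent iff they share a vertex. -/
def middleGraph {V : Type*} (G : SimpleGraph V) : SimpleGraph (V ⊕ G.edgeSet) where
  Adj x y :=
    match x, y with
    | Sum.inl _, Sum.inl _ => False
    | Sum.inl v, Sum.inr e => v ∈ (e : Sym2 V)
    | Sum.inr e, Sum.inl v => v ∈ (e : Sym2 V)
    | Sum.inr e, Sum.inr f => e ≠ f ∧ ∃ v, v ∈ (e : Sym2 V) ∧ v ∈ (f : Sym2 V)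
  symm := by
    constructor
    rintro (v | e) (w | f) h
    · exact h.elim
    · exact h
    · exact h
    · exact ⟨Ne.symm h.1, h.2.imp fun v hv => ⟨hv.2, hv.1⟩⟩
  loopless := by
    constructor
    rintro (v | e) h
    · exact h
    · exact h.1 rfl

/-- The edge cover number `ρ(G)`: minimum number of edges covering all vertices. -/
noncomputable def edgeCoverNum {V : Type*} (G : SimpleGraph V) : ℕ :=
  sInf {k | ∃ C : Set (Sym2 V), C ⊆ G.edgeSet ∧ (∀ v : V, ∃ e ∈ C, v ∈ e) ∧ C.ncard = k}

/-- The wheel graph with hub `none` and a cycle on `ZMod n` (so `n + 1` vertices). -/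
def wheelGraph (n : ℕ) : SimpleGraph (Option (ZMod n)) where
  Adj x y :=
    match x, y with
    | none, none => False
    | none, some _ => True
    | some _, none => True
    | some i, some j => i ≠ j ∧ (i - j = 1 ∨ j - i = 1)
  symm := by
    constructor
    rintro (_ | i) (_ | j) h
    · exact h.elim
    · trivial
    · trivial
    · exact ⟨h.1.symm, h.2.symm⟩
  loopless := by
    constructor
    rintro (_ | i) h
    · exact h
    · exact h.1 rfl

/-- The friendship graph `F n`: `n` triangles sharing the common vertex `none`. -/
def friendshipGraph (n : ℕ) : SimpleGraph (Option (Fin n × Fin 2)) where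
  Adj x y :=
    match x, y with
    | none, none => False
    | none, some _ => True
    | some _, none => True
    | some (i, a), some (j, b) => i = j ∧ a ≠ b
  symm := by
    constructor
    rintro (_ | ⟨i, a⟩) (_ | ⟨j, b⟩) h
    · exact h.elim
    · trivial
    · trivial
    · exact ⟨h.1.symm, h.2.symm⟩
  loopless := by
    constructor
    rintro (_ | ⟨i, a⟩) h
    · exact h
    · exact h.2 rfl

/-- The corona `G ∘ K₁`: each vertex `Sum.inl v` of `G` gets a pendant vertex `Sum.inr v`. -/
def corona {V : Type*} (G : SimpleGraph V) : SimpleGraph (V ⊕ V) where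
  Adj x y :=
    match x, y with
    | Sum.inl v, Sum.inl w => G.Adj v w
    | Sum.inl v, Sum.inr w => v = w
    | Sum.inr v, Sum.inl w => v = w
    | Sum.inr _, Sum.inr _ => False
  symm := by
    constructor
    rintro (v | v) (w | w) h
    · exact G.adj_symm h
    · exact h.symm
    · exact h.symm
    · exact h.elim
  loopless := by
    constructor
    rintro (v | v) h
    · exact G.irrefl h
    · exact h

/-- The 2-corona `G ∘ P₂`: each vertex `Sum.inl v` of `G` gets a pendant path
`Sum.inl v — Sum.inr (Sum.inl v) — Sum.inr (Sum.inr v)`. -/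
def corona2 {V : Type*} (G : SimpleGraph V) : SimpleGraph (V ⊕ (V ⊕ V)) where
  Adj x y :=
    match x, y with
    | Sum.inl v, Sum.inl w => G.Adj v w
    | Sum.inl v, Sum.inr (Sum.inl w) => v = w
    | Sum.inr (Sum.inl v), Sum.inl w => v = w
    | Sum.inr (Sum.inl v), Sum.inr (Sum.inr w) => v = w
    | Sum.inr (Sum.inr v), Sum.inr (Sum.inl w) => v = w
    | _, _ => False
  symm := by
    constructor
    rintro (v | v | v) (w | w | w) h
    · exact G.adj_symm h
    · exact h.symm
    · exact h.elim
    · exact h.symm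
    · exact h.elim
    · exact h.symm
    · exact h.elim
    · exact h.symm
    · exact h.elim
  loopless := by
    constructor
    rintro (v | v | v) h
    · exact G.irrefl h
    · exact h
    · exact h

/-- The join `G + K̄ p` of `G` with the empty graph on `p` vertices. -/
def joinEmpty {V : Type*} (G : SimpleGraph V) (p : ℕ) : SimpleGraph (V ⊕ Fin p) where
  Adj x y :=
    match x, y with
    | Sum.inl v, Sum.inl w => G.Adj v w
    | Sum.inl _, Sum.inr _ => True
    | Sum.inr _, Sum.inl _ => True
    | Sum.inr _, Sum.inr _ => False
  symm := by
    constructor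
    rintro (v | v) (w | w) h
    · exact G.adj_symm h
    · trivial
    · trivial
    · exact h.elim
  loopless := by
    constructor
    rintro (v | v) h
    · exact G.irrefl h
    · exact h

namespace SimpleGraph

variable {V : Type*} {G : SimpleGraph V}

lemma Preconnected.edgeSet_nonempty [Nontrivial V] (hG : G.Preconnected) : G.edgeSet.Nonempty :=
  let ⟨v⟩ := ‹Nontrivial V›.to_nonempty
  let ⟨u, hvu⟩ := hG.exists_adj_of_nontrivial v
  ⟨s(v, u), hvu⟩

lemma lineGraph_reachable_of_mem {e f : G.edgeSet} {v : V} (he : v ∈ (e : Sym2 V))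
    (hf : v ∈ (f : Sym2 V)) : G.lineGraph.Reachable e f := by
  by_cases h : e = f
  · exact h ▸ .rfl
  · exact (lineGraph_adj_iff_exists.mpr ⟨h, v, he, hf⟩).reachable

lemma Walk.lineGraph_reachable {a b : V} (p : G.Walk a b) {e f : G.edgeSet}
    (he : a ∈ (e : Sym2 V)) (hf : b ∈ (f : Sym2 V)) : G.lineGraph.Reachable e f := by
  induction p generalizing e with
  | nil => exact lineGraph_reachable_of_mem he hf
  | @cons a c b hac p ih =>
    exact (lineGraph_reachable_of_mem (f := ⟨s(a, c), hac⟩) he (Sym2.mem_mk_left a c)).trans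
      (ih (Sym2.mem_mk_right a c) hf)

lemma Preconnected.lineGraph (hG : G.Preconnected) : G.lineGraph.Preconnected := fun e f =>
  let ⟨p⟩ := hG (e : Sym2 V).out.1 (f : Sym2 V).out.1
  p.lineGraph_reachable (Sym2.out_fst_mem _) (Sym2.out_fst_mem _)

lemma Connected.lineGraph (hG : G.Connected) (hE : G.edgeSet.Nonempty) :
    G.lineGraph.Connected :=
  have := hE.to_subtype
  ⟨hG.preconnected.lineGraph⟩

end SimpleGraph

section MiddleGraph

open Finset

variable {V : Type*} (G : SimpleGraph V)

lemma isDomSet_middleGraph_range_inl : IsDomSet (middleGraph G) (Set.range Sum.inl) := by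
  rintro (v | e)
  · exact ⟨Sum.inl v, ⟨v, rfl⟩, Or.inl rfl⟩
  · exact ⟨Sum.inl (e : Sym2 V).out.1, ⟨_, rfl⟩, Or.inr (Sym2.out_fst_mem _)⟩

def lineGraphHomInduceComplRangeInl :
    G.lineGraph →g (middleGraph G).induce (Set.range Sum.inl)ᶜ where
  toFun e := ⟨Sum.inr e, by simp⟩
  map_rel' h := lineGraph_adj_iff_exists.mp h

lemma lineGraphHomInduceComplRangeInl_surjective :
    Function.Surjective (lineGraphHomInduceComplRangeInl G) := by
  rintro ⟨v | e, hx⟩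
  · exact absurd ⟨v, rfl⟩ hx
  · exact ⟨e, rfl⟩

lemma connected_middleGraph_induce_compl_range_inl (hG : G.Connected)
    (hE : G.edgeSet.Nonempty) : ((middleGraph G).induce (Set.range Sum.inl)ᶜ).Connected :=
  (hG.lineGraph hE).map _ (lineGraphHomInduceComplRangeInl_surjective G)

lemma ncard_setOf_middleGraph_dominated_le_two (x : V ⊕ G.edgeSet) :
    {v : V | x = Sum.inl v ∨ (middleGraph G).Adj x (Sum.inl v)}.ncard ≤ 2 := by
  rcases x with w | ⟨e, he⟩
  · refine (Set.ncard_le_ncard (t := {w}) ?_).trans (by simp)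
    rintro v (h | h)
    · exact (Sum.inl_injective h).symm
    · exact h.elim
  · induction e using Sym2.ind with
    | _ a b =>
      refine (Set.ncard_le_ncard (t := {a, b}) ?_).trans
        ((Set.ncard_insert_le a {b}).trans (by simp))
      rintro v (h | h)
      · exact (Sum.inr_ne_inl h).elim
      · exact Sym2.mem_iff.mp h

lemma IsDomSet.card_le_two_mul_ncard_middleGraph [Fintype V] {S : Set (V ⊕ G.edgeSet)}
    (hS : IsDomSet (middleGraph G) S) : Fintype.card V ≤ 2 * S.ncard := by
  classical
  choose g hgS hg using fun v : V => hS (Sum.inl v)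
  have hfiber : ∀ x ∈ univ.image g, #{v | g v = x} ≤ 2 := fun x _ => by
    rw [← Set.ncard_coe_finset, coe_filter]
    refine (Set.ncard_le_ncard ?_).trans (ncard_setOf_middleGraph_dominated_le_two G x)
    rintro v ⟨-, rfl⟩
    exact hg v
  have himage : #(univ.image g) ≤ S.ncard := by
    rw [← Set.ncard_coe_finset]
    exact Set.ncard_le_ncard (by simpa [Set.subset_def] using hgS)
  calc Fintype.card V ≤ 2 * #(univ.image g) := card_le_mul_card_image _ 2 hfiber
    _ ≤ 2 * S.ncard := Nat.mul_le_mul_left 2 himage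

end MiddleGraph

theorem stmt1 {V : Type*} [Fintype V] (G : SimpleGraph V) (n : ℕ)
    (hn : Fintype.card V = n) (h2 : 2 ≤ n) (hc : G.Connected) :
    (n + 1) / 2 ≤ outConnDomNum (middleGraph G) ∧ outConnDomNum (middleGraph G) ≤ n := by
  have : Nontrivial V := Fintype.one_lt_card_iff_nontrivial.mp (by omega)
  have hmem : n ∈ {k | ∃ S : Set (V ⊕ G.edgeSet), IsDomSet (middleGraph G) S ∧
      ((middleGraph G).induce Sᶜ).Connected ∧ S.ncard = k} :=
    ⟨_, isDomSet_middleGraph_range_inl G,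
      connected_middleGraph_induce_compl_range_inl G hc hc.preconnected.edgeSet_nonempty,
      by rw [Set.ncard_range_of_injective Sum.inl_injective, Nat.card_eq_fintype_card, hn]⟩
  obtain ⟨S, hS, -, hS_card⟩ := Nat.sInf_mem ⟨n, hmem⟩
  have hV := hS.card_le_two_mul_ncard_middleGraph
  refine ⟨?_, Nat.sInf_le hmem⟩
  unfold outConnDomNum
  omega
end

section
/- For any tree T with n ≥ 2 vertices, the outer-connected domination number of the middle graph M(T) equals n. -/
open SimpleGraph

/-!
The vertex set `V(T) ⊆ V(M(T))` is dominating, and its complement, the line graph of `T`, is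
connected, so `γ̃_c(M(T)) ≤ n`. Conversely, let `S` be an outer-connected dominating set. Every
vertex `v ∉ S` is dominated by an edge of `S` incident to `v`. No edge `e = uv ∈ S` can dominate
both of its endpoints `u, v ∉ S`: the vertices and edges outside `S` all avoid `e`, so a path
from `u` to `v` in `M(T) - S` projects to a walk from `u` to `v` in `T - e`, which is impossible
since every edge of a tree is a bridge. Hence `v ↦ v` or `v ↦ (an edge of S at v)` injects
`V(T)` into `S`.
-/

namespace SimpleGraph

variable {V W : Type*} {G : SimpleGraph V}

theorem Reachable.map_of_adj_reachable {H : SimpleGraph W} (φ : V → W)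
    (hφ : ∀ ⦃x y⦄, G.Adj x y → H.Reachable (φ x) (φ y)) {x y : V} (h : G.Reachable x y) :
    H.Reachable (φ x) (φ y) := by
  rw [reachable_iff_reflTransGen] at h ⊢
  exact h.lift' φ fun a b hab => (reachable_iff_reflTransGen _ _).mp (hφ hab)

theorem reachable_of_mem_of_mem_edgeSet {e : Sym2 V} (he : e ∈ G.edgeSet) {u v : V}
    (hu : u ∈ e) (hv : v ∈ e) : G.Reachable u v := by
  obtain rfl | hne := eq_or_ne u v
  · rfl
  · rw [(Sym2.mem_and_mem_iff hne).mp ⟨hu, hv⟩] at he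
    exact Adj.reachable he

end SimpleGraph

section MiddleGraph

variable {V : Type*} {G : SimpleGraph V}

theorem isDomSet_range_inl (G : SimpleGraph V) :
    IsDomSet (middleGraph G) (Set.range Sum.inl) := by
  rintro (v | e)
  · exact ⟨Sum.inl v, ⟨v, rfl⟩, Or.inl rfl⟩
  · exact ⟨Sum.inl (e : Sym2 V).out.1, ⟨_, rfl⟩, Or.inr (Sym2.out_fst_mem _)⟩

theorem connected_induce_compl_range_inl [Nontrivial V] (hG : G.Preconnected) :
    ((middleGraph G).induce (Set.range Sum.inl)ᶜ).Connected := by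
  set L := (middleGraph G).induce (Set.range (Sum.inl : V → V ⊕ G.edgeSet))ᶜ
  let ψ : G.edgeSet → ↥((Set.range (Sum.inl : V → V ⊕ G.edgeSet))ᶜ) :=
    fun e => ⟨Sum.inr e, by simp⟩
  have hψ : Function.Surjective ψ := by
    rintro ⟨v | e, hx⟩
    · exact absurd ⟨v, rfl⟩ hx
    · exact ⟨e, rfl⟩
  have hshare : ∀ {e f : G.edgeSet} {v : V}, v ∈ (e : Sym2 V) → v ∈ (f : Sym2 V) →
      L.Reachable (ψ e) (ψ f) := by
    intro e f v he hf
    obtain rfl | hne := eq_or_ne e f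
    · rfl
    · exact Adj.reachable (G := L) ⟨hne, v, he, hf⟩
  -- Pick an incident edge `ε v` at each vertex; walks of `G` then lift to the line graph.
  choose w hw using hG.exists_adj_of_nontrivial
  let ε : V → G.edgeSet := fun v => ⟨s(v, w v), hw v⟩
  have hε : ∀ ⦃u v⦄, G.Adj u v → L.Reachable (ψ (ε u)) (ψ (ε v)) := fun u v huv =>
    (hshare (e := ε u) (f := ⟨s(u, v), huv⟩) (Sym2.mem_mk_left _ _)
      (Sym2.mem_mk_left _ _)).trans
      (hshare (f := ε v) (Sym2.mem_mk_right _ _) (Sym2.mem_mk_left _ _))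
  refine (connected_iff _).mpr ⟨?_, ⟨ψ (ε (Classical.arbitrary V))⟩⟩
  intro x y
  obtain ⟨e, rfl⟩ := hψ x
  obtain ⟨f, rfl⟩ := hψ y
  have hef := (hG (e : Sym2 V).out.1 (f : Sym2 V).out.1).map_of_adj_reachable _ hε
  exact ((hshare (Sym2.out_fst_mem _) (Sym2.mem_mk_left _ _)).trans hef).trans
    (hshare (Sym2.mem_mk_left _ _) (Sym2.out_fst_mem _))

theorem exists_edge_mem_of_isDomSet {S : Set (V ⊕ G.edgeSet)}
    (hS : IsDomSet (middleGraph G) S) {v : V} (hv : Sum.inl v ∉ S) : ∃ e : G.edgeSet, Sum.inr e ∈ S ∧ v ∈ (e : Sym2 V) := by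
  obtain ⟨u | e, huS, hu⟩ := hS (Sum.inl v)
  · rcases hu with h | h
    · exact absurd (h ▸ huS) hv
    · exact h.elim
  · rcases hu with h | h
    · exact Sum.inr_ne_inl h |>.elim
    · exact ⟨e, huS, h⟩

theorem reachable_deleteEdges_of_preconnected_induce_compl {S : Set (V ⊕ G.edgeSet)}
    (hS : ((middleGraph G).induce Sᶜ).Preconnected) {e : G.edgeSet} (he : Sum.inr e ∈ S)
    {v w : V} (hv : Sum.inl v ∉ S) (hw : Sum.inl w ∉ S) :
    (G.deleteEdges {(e : Sym2 V)}).Reachable v w := by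
  set H := G.deleteEdges {(e : Sym2 V)}
  have hedge : ∀ f : G.edgeSet, Sum.inr f ∉ S → ∀ u ∈ (f : Sym2 V), ∀ u' ∈ (f : Sym2 V),
      H.Reachable u u' := by
    intro f hf u hu u' hu'
    refine reachable_of_mem_of_mem_edgeSet ?_ hu hu'
    rw [edgeSet_deleteEdges]
    exact ⟨f.2, fun h => hf (Subtype.ext h ▸ he)⟩
  let φ : (Sᶜ : Set (V ⊕ G.edgeSet)) → V :=
    fun x => Sum.elim id (fun f => (f : Sym2 V).out.1) x.1
  have hφ : ∀ ⦃x y⦄, ((middleGraph G).induce Sᶜ).Adj x y → H.Reachable (φ x) (φ y) := by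
    rintro ⟨u | f, hx⟩ ⟨u' | f', hy⟩ hxy
    · exact hxy.elim
    · exact hedge f' hy _ hxy _ (Sym2.out_fst_mem _)
    · exact hedge f hx _ (Sym2.out_fst_mem _) _ hxy
    · obtain ⟨-, u, hu, hu'⟩ := hxy
      exact (hedge f hx _ (Sym2.out_fst_mem _) u hu).trans
        (hedge f' hy u hu' _ (Sym2.out_fst_mem _))
  exact (hS ⟨Sum.inl v, hv⟩ ⟨Sum.inl w, hw⟩).map_of_adj_reachable φ hφ

theorem SimpleGraph.IsAcyclic.eq_of_mem_of_notMem {S : Set (V ⊕ G.edgeSet)}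
    (hG : G.IsAcyclic) (hS : ((middleGraph G).induce Sᶜ).Preconnected) {e : G.edgeSet} (he : Sum.inr e ∈ S)
    {v w : V} (hve : v ∈ (e : Sym2 V)) (hwe : w ∈ (e : Sym2 V)) (hv : Sum.inl v ∉ S)
    (hw : Sum.inl w ∉ S) : v = w := by
  by_contra hne
  have hvw : (e : Sym2 V) = s(v, w) := (Sym2.mem_and_mem_iff hne).mp ⟨hve, hwe⟩
  have hbridge := isAcyclic_iff_forall_adj_isBridge.mp hG (G.mem_edgeSet.mp (hvw ▸ e.2))
  exact isBridge_iff.mp hbridge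
    (hvw ▸ reachable_deleteEdges_of_preconnected_induce_compl hS he hv hw)

theorem SimpleGraph.IsAcyclic.card_le_ncard_of_isDomSet [Finite V] {S : Set (V ⊕ G.edgeSet)}
    (hG : G.IsAcyclic) (hdom : IsDomSet (middleGraph G) S)
    (hS : ((middleGraph G).induce Sᶜ).Preconnected) : Nat.card V ≤ S.ncard := by
  classical
  choose F hFS hFv using fun v (hv : Sum.inl v ∉ S) => exists_edge_mem_of_isDomSet hdom hv
  let f : V → V ⊕ G.edgeSet :=
    fun v => if hv : Sum.inl v ∈ S then Sum.inl v else Sum.inr (F v hv)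
  rw [← Set.ncard_univ]
  refine Set.ncard_le_ncard_of_injOn f (fun v _ => ?_) (fun v _ w _ hvw => ?_)
  · by_cases hv : Sum.inl v ∈ S
    · simp [f, hv]
    · simpa [f, hv] using hFS v hv
  · simp only [f] at hvw
    split_ifs at hvw with hv hw hw
    · exact Sum.inl_injective hvw
    · exact hG.eq_of_mem_of_notMem hS (hFS v hv) (hFv v hv)
        (Sum.inr_injective hvw ▸ hFv w hw) hv hw

theorem outConnDomNum_middleGraph_of_isTree [Finite V] [Nontrivial V] (hG : G.IsTree) :
    outConnDomNum (middleGraph G) = Nat.card V := by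
  have hmem : Nat.card V ∈ {k | ∃ S : Set (V ⊕ G.edgeSet), IsDomSet (middleGraph G) S ∧
      ((middleGraph G).induce Sᶜ).Connected ∧ S.ncard = k} :=
    ⟨Set.range Sum.inl, isDomSet_range_inl G,
      connected_induce_compl_range_inl hG.connected.preconnected,
      Set.ncard_range_of_injective Sum.inl_injective⟩
  refine le_antisymm (Nat.sInf_le hmem) (le_csInf ⟨_, hmem⟩ ?_)
  rintro _ ⟨S, hdom, hS, rfl⟩
  exact hG.isAcyclic.card_le_ncard_of_isDomSet hdom hS.preconnected

end MiddleGraph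

theorem stmt2 {V : Type*} [Fintype V] (T : SimpleGraph V) (n : ℕ)
    (hn : Fintype.card V = n) (h2 : 2 ≤ n) (hT : T.IsTree) :
    outConnDomNum (middleGraph T) = n := by
  have : Nontrivial V := Fintype.one_lt_card_iff_nontrivial.mp (by omega)
  rw [outConnDomNum_middleGraph_of_isTree hT, Nat.card_eq_fintype_card, hn]
end

section
/- Let G be a connected graph with n ≥ 4 vertices. Then γ̃_c(M(G)) = n if and only if G is a tree. -/
/-!
For a tree `G`, the vertex set `V(G)` is an outer-connected dominating set of `M(G)`: its
complement, the set of edges, is connected because `G` is. No smaller one exists: a vertex `v`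
of `G` outside `S` is dominated by an edge of `S` at `v`, and two such vertices `v, v'` cannot
share that edge `vv'`, since a path from `v` to `v'` in `M(G) - S` projects to a walk of `G`
avoiding `vv'`, impossible in a tree. So `S` contains at least as many edges as vertices it misses.

If `G` is not a tree, it has an edge `vw` that is not a bridge, and `(V(G) \ {v, w}) ∪ {vw}` is an
outer-connected dominating set of size `n - 1`; its complement is connected because `G - vw` is.
-/

open SimpleGraph

open Sum Set

theorem Set.ncard_preimage_inl_add_ncard_preimage_inr {α β : Type*} [Finite (α ⊕ β)]
    (s : Set (α ⊕ β)) : (inl ⁻¹' s).ncard + (inr ⁻¹' s).ncard = s.ncard := by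
  conv_rhs => rw [← image_preimage_inl_union_image_preimage_inr s]
  rw [ncard_union_eq disjoint_image_inl_image_inr, ncard_image_of_injective _ inl_injective,
    ncard_image_of_injective _ inr_injective]

theorem Sym2.exists_mem_ne_and_ne {α : Type*} {e : Sym2 α} {v w : α} (he : ¬ e.IsDiag)
    (hne : e ≠ s(v, w)) : ∃ u ∈ e, u ≠ v ∧ u ≠ w := by
  induction e using Sym2.ind with
  | h a b =>
    simp only [Sym2.mk_isDiag_iff, ne_eq, Sym2.eq, Sym2.rel_iff', Prod.mk.injEq,
      Prod.swap_prod_mk, Sym2.mem_iff, exists_eq_or_imp, exists_eq_left] at he hne ⊢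
    grind

theorem SimpleGraph.IsAcyclic.adj_of_le_of_reachable {V : Type*} {G H : SimpleGraph V}
    (hG : G.IsAcyclic) (hle : H ≤ G) {v w : V} (hvw : G.Adj v w) (h : H.Reachable v w) :
    H.Adj v w :=
  ((isAcyclic_iff_forall_adj_isBridge.1 hG hvw).anti hle).reachable_iff_adj.1 h

def IsOuterConnDomSet {W : Type*} (H : SimpleGraph W) (S : Set W) : Prop :=
  IsDomSet H S ∧ (H.induce Sᶜ).Connected

section OuterConnDomNum

variable {W : Type*} {H : SimpleGraph W} {S : Set W}

theorem outConnDomNum_le (hS : IsOuterConnDomSet H S) : outConnDomNum H ≤ S.ncard :=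
  Nat.sInf_le ⟨S, hS.1, hS.2, rfl⟩

theorem le_outConnDomNum {k : ℕ} (hne : ∃ S, IsOuterConnDomSet H S)
    (h : ∀ S, IsOuterConnDomSet H S → k ≤ S.ncard) : k ≤ outConnDomNum H := by
  obtain ⟨S, hS⟩ := hne
  exact le_csInf ⟨_, S, hS.1, hS.2, rfl⟩ fun _ ⟨T, hT, hT', hk⟩ => hk ▸ h T ⟨hT, hT'⟩

end OuterConnDomNum

section MiddleGraph

variable {V : Type*} {G : SimpleGraph V}

def edgeTrace (A : Set (V ⊕ G.edgeSet)) : SimpleGraph V :=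
  fromEdgeSet (Subtype.val '' (inr ⁻¹' A))

-- Projects walks of `M(G)[A]` onto walks of `edgeTrace A`.
noncomputable def baseVertex : V ⊕ G.edgeSet → V :=
  Sum.elim id fun e => (e : Sym2 V).out.1

variable {A : Set (V ⊕ G.edgeSet)}

theorem edgeTrace_adj {a b : V} :
    (edgeTrace A).Adj a b ↔ ∃ e : G.edgeSet, inr e ∈ A ∧ (e : Sym2 V) = s(a, b) := by
  simp only [edgeTrace, fromEdgeSet_adj, mem_image, mem_preimage]
  refine ⟨And.left, fun h => ⟨h, ?_⟩⟩
  obtain ⟨e, -, he⟩ := h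
  exact G.ne_of_adj (by rw [← mem_edgeSet, ← he]; exact e.2)

theorem edgeTrace_le : edgeTrace A ≤ G := fun _ _ h => by
  obtain ⟨e, -, he⟩ := edgeTrace_adj.1 h
  rw [← mem_edgeSet, ← he]
  exact e.2

theorem edgeTrace_reachable_of_mem {e : G.edgeSet} (he : inr e ∈ A) {a b : V}
    (ha : a ∈ (e : Sym2 V)) (hb : b ∈ (e : Sym2 V)) : (edgeTrace A).Reachable a b := by
  obtain rfl | hab := eq_or_ne a b
  · rfl
  · exact (edgeTrace_adj.2 ⟨e, he, (Sym2.mem_and_mem_iff hab).1 ⟨ha, hb⟩⟩).reachable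

theorem edgeTrace_reachable_baseVertex_of_adj {x y : V ⊕ G.edgeSet} (hx : x ∈ A) (hy : y ∈ A)
    (h : (middleGraph G).Adj x y) : (edgeTrace A).Reachable (baseVertex x) (baseVertex y) := by
  rcases x with v | e <;> rcases y with w | f
  · exact h.elim
  · exact edgeTrace_reachable_of_mem hy h (Sym2.out_fst_mem _)
  · exact edgeTrace_reachable_of_mem hx (Sym2.out_fst_mem _) h
  · obtain ⟨-, v, hve, hvf⟩ := h
    exact (edgeTrace_reachable_of_mem hx (Sym2.out_fst_mem _) hve).trans
      (edgeTrace_reachable_of_mem hy hvf (Sym2.out_fst_mem _))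

theorem SimpleGraph.Reachable.edgeTrace_baseVertex {x y : A}
    (h : ((middleGraph G).induce A).Reachable x y) :
    (edgeTrace A).Reachable (baseVertex x.1) (baseVertex y.1) := by
  rw [reachable_iff_reflTransGen] at h ⊢
  exact Relation.ReflTransGen.lift' (fun z : A => baseVertex z.1)
    (fun x y hxy => (reachable_iff_reflTransGen _ _).1
      (edgeTrace_reachable_baseVertex_of_adj x.2 y.2 hxy)) _ _ h

theorem middleGraph_induce_reachable_inr_of_mem {e f : G.edgeSet} (he : inr e ∈ A)
    (hf : inr f ∈ A) {v : V} (hve : v ∈ (e : Sym2 V)) (hvf : v ∈ (f : Sym2 V)) :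
    ((middleGraph G).induce A).Reachable ⟨inr e, he⟩ ⟨inr f, hf⟩ := by
  obtain rfl | hef := eq_or_ne e f
  · rfl
  · exact Adj.reachable (show (middleGraph G).Adj (inr e) (inr f) from ⟨hef, v, hve, hvf⟩)

theorem middleGraph_induce_reachable_inr_of_edgeTrace {a b : V}
    (hab : (edgeTrace A).Reachable a b) {e f : G.edgeSet} (he : inr e ∈ A) (hf : inr f ∈ A)
    (hae : a ∈ (e : Sym2 V)) (hbf : b ∈ (f : Sym2 V)) :
    ((middleGraph G).induce A).Reachable ⟨inr e, he⟩ ⟨inr f, hf⟩ := by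
  obtain ⟨p⟩ := hab
  induction p generalizing e with
  | nil => exact middleGraph_induce_reachable_inr_of_mem he hf hae hbf
  | cons hac _ ih =>
    obtain ⟨g, hg, hgac⟩ := edgeTrace_adj.1 hac
    exact (middleGraph_induce_reachable_inr_of_mem he hg hae (hgac ▸ Sym2.mem_mk_left _ _)).trans
      (ih hg (hgac ▸ Sym2.mem_mk_right _ _) hbf)

theorem middleGraph_induce_connected (hA : (edgeTrace A).Preconnected)
    (hinl : ∀ v, inl v ∈ A → ∃ e : G.edgeSet, inr e ∈ A ∧ v ∈ (e : Sym2 V))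
    (hinr : ∃ e : G.edgeSet, inr e ∈ A) : ((middleGraph G).induce A).Connected := by
  have toEdge (x : A) : ∃ (e : G.edgeSet) (he : inr e ∈ A),
      ((middleGraph G).induce A).Reachable x ⟨inr e, he⟩ := by
    obtain ⟨v | e, hx⟩ := x
    · obtain ⟨e, he, hve⟩ := hinl v hx
      exact ⟨e, he, Adj.reachable (show (middleGraph G).Adj (inl v) (inr e) from hve)⟩
    · exact ⟨e, hx, .rfl⟩
  obtain ⟨e, he⟩ := hinr
  have : Nonempty A := ⟨⟨inr e, he⟩⟩
  refine ⟨fun x y => ?_⟩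
  obtain ⟨e, he, hxe⟩ := toEdge x
  obtain ⟨f, hf, hyf⟩ := toEdge y
  exact hxe.trans <| (middleGraph_induce_reachable_inr_of_edgeTrace (hA _ _) he hf
    (Sym2.out_fst_mem _) (Sym2.out_fst_mem _)).trans hyf.symm

theorem isDomSet_middleGraph_range_inl_s5 : IsDomSet (middleGraph G) (range inl) := by
  rintro (v | e)
  · exact ⟨inl v, mem_range_self v, .inl rfl⟩
  · exact ⟨inl (e : Sym2 V).out.1, mem_range_self _, .inr (Sym2.out_fst_mem _)⟩

theorem edgeTrace_compl_range_inl : edgeTrace (G := G) (range inl)ᶜ = G := by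
  ext a b
  rw [edgeTrace_adj]
  refine ⟨fun ⟨e, _, he⟩ => ?_, fun h => ⟨⟨s(a, b), h⟩, by simp, rfl⟩⟩
  rw [← mem_edgeSet, ← he]
  exact e.2

theorem isOuterConnDomSet_middleGraph_range_inl (hG : G.Connected) (hE : G.edgeSet.Nonempty) :
    IsOuterConnDomSet (middleGraph G) (range inl) := by
  refine ⟨isDomSet_middleGraph_range_inl_s5, middleGraph_induce_connected ?_ ?_ ?_⟩
  · exact edgeTrace_compl_range_inl ▸ hG.preconnected
  · exact fun v hv => absurd (mem_range_self v) hv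
  · obtain ⟨e, he⟩ := hE
    exact ⟨⟨e, he⟩, by simp⟩

theorem card_le_ncard_of_isAcyclic [Finite V] (hG : G.IsAcyclic)
    {S : Set (V ⊕ G.edgeSet)} (hS : IsDomSet (middleGraph G) S)
    (hSc : ((middleGraph G).induce Sᶜ).Preconnected) : Nat.card V ≤ S.ncard := by
  have hdom (v : ↥(inl ⁻¹' S)ᶜ) : ∃ e : ↥(inr ⁻¹' S), v.1 ∈ (e.1 : Sym2 V) := by
    obtain ⟨_ | e, hu, h | hadj⟩ := hS (inl v)
    · exact absurd (inl_injective h ▸ hu) v.2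
    · exact hadj.elim
    · exact (inr_ne_inl h).elim
    · exact ⟨⟨e, hu⟩, hadj⟩
  choose f hf using hdom
  have hinj : Function.Injective f := by
    intro v v' hff
    by_contra hne
    have hvv' : (f v : Sym2 V) = s(v.1, v'.1) :=
      (Sym2.mem_and_mem_iff (Subtype.coe_ne_coe.2 hne)).1 ⟨hf v, hff ▸ hf v'⟩
    have hreach : (edgeTrace Sᶜ).Reachable v v' :=
      Reachable.edgeTrace_baseVertex (hSc ⟨inl v, v.2⟩ ⟨inl v', v'.2⟩)
    have hadj := hG.adj_of_le_of_reachable edgeTrace_le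
      (by rw [← mem_edgeSet, ← hvv']; exact (f v).1.2) hreach
    obtain ⟨e, heS, he⟩ := edgeTrace_adj.1 hadj
    exact heS (Subtype.ext (he.trans hvv'.symm) ▸ (f v).2)
  calc Nat.card V = (inl ⁻¹' S).ncard + (inl ⁻¹' S)ᶜ.ncard := (ncard_add_ncard_compl _).symm
    _ ≤ (inl ⁻¹' S).ncard + (inr ⁻¹' S).ncard := by
      gcongr
      exact Nat.card_le_card_of_injective f hinj
    _ = S.ncard := ncard_preimage_inl_add_ncard_preimage_inr S

-- `V(G)` with the endpoints `v, w` replaced by the edge `vw`.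
def swapEdgeSet (G : SimpleGraph V) (v w : V) : Set (V ⊕ G.edgeSet) :=
  {x | x.elim (fun u => u ≠ v ∧ u ≠ w) fun e => (e : Sym2 V) = s(v, w)}

section SwapEdgeSet

variable {v w : V}

@[simp] theorem inl_mem_swapEdgeSet {u : V} : inl u ∈ swapEdgeSet G v w ↔ u ≠ v ∧ u ≠ w := .rfl

@[simp] theorem inr_mem_swapEdgeSet {e : G.edgeSet} :
    inr e ∈ swapEdgeSet G v w ↔ (e : Sym2 V) = s(v, w) := .rfl

theorem isDomSet_middleGraph_swapEdgeSet (hvw : G.Adj v w) :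
    IsDomSet (middleGraph G) (swapEdgeSet G v w) := by
  rintro (u | e)
  · by_cases hu : u ≠ v ∧ u ≠ w
    · exact ⟨inl u, inl_mem_swapEdgeSet.2 hu, .inl rfl⟩
    · refine ⟨inr ⟨s(v, w), hvw⟩, inr_mem_swapEdgeSet.2 rfl, .inr ?_⟩
      show u ∈ s(v, w)
      grind
  · by_cases he : (e : Sym2 V) = s(v, w)
    · exact ⟨inr e, inr_mem_swapEdgeSet.2 he, .inl rfl⟩
    · obtain ⟨u, hue, hu⟩ := Sym2.exists_mem_ne_and_ne (G.not_isDiag_of_mem_edgeSet e.2) he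
      exact ⟨inl u, inl_mem_swapEdgeSet.2 hu, .inr hue⟩

theorem edgeTrace_compl_swapEdgeSet :
    edgeTrace (swapEdgeSet G v w)ᶜ = G.deleteEdges {s(v, w)} := by
  ext a b
  simp only [edgeTrace_adj, mem_compl_iff, inr_mem_swapEdgeSet, deleteEdges_adj,
    mem_singleton_iff]
  refine ⟨fun ⟨e, hne, he⟩ => ⟨?_, he ▸ hne⟩, fun ⟨h, hne⟩ => ⟨⟨s(a, b), h⟩, hne, rfl⟩⟩
  rw [← mem_edgeSet, ← he]
  exact e.2

theorem ncard_swapEdgeSet_add_one [Finite V] (hvw : G.Adj v w) :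
    (swapEdgeSet G v w).ncard + 1 = Nat.card V := by
  have hinl : inl ⁻¹' swapEdgeSet G v w = {v, w}ᶜ := by ext u; simp
  have hinr : inr ⁻¹' swapEdgeSet G v w = {⟨s(v, w), hvw⟩} := by
    ext e
    simp [Subtype.ext_iff]
  have := ncard_add_ncard_compl ({v, w} : Set V)
  rw [ncard_pair (G.ne_of_adj hvw)] at this
  rw [← ncard_preimage_inl_add_ncard_preimage_inr, hinl, hinr, ncard_singleton]
  omega

theorem isOuterConnDomSet_middleGraph_swapEdgeSet (hG : G.Connected) (hvw : G.Adj v w)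
    (hb : ¬ G.IsBridge s(v, w)) : IsOuterConnDomSet (middleGraph G) (swapEdgeSet G v w) := by
  have hconn := hG.connected_delete_edge_of_not_isBridge hb
  have : Nontrivial V := ⟨v, w, G.ne_of_adj hvw⟩
  have hinl (u : V) : ∃ e : G.edgeSet, inr e ∈ (swapEdgeSet G v w)ᶜ ∧ u ∈ (e : Sym2 V) := by
    obtain ⟨x, hx⟩ := hconn.preconnected.exists_adj_of_nontrivial u
    rw [← edgeTrace_compl_swapEdgeSet] at hx
    obtain ⟨e, he, hex⟩ := edgeTrace_adj.1 hx
    exact ⟨e, he, hex ▸ Sym2.mem_mk_left _ _⟩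
  refine ⟨isDomSet_middleGraph_swapEdgeSet hvw, middleGraph_induce_connected ?_
    (fun u _ => hinl u) ((hinl v).imp fun _ => And.left)⟩
  exact edgeTrace_compl_swapEdgeSet ▸ hconn.preconnected

end SwapEdgeSet

end MiddleGraph

theorem stmt5 {V : Type*} [Fintype V] (G : SimpleGraph V) (n : ℕ)
    (hn : Fintype.card V = n) (h4 : 4 ≤ n) (hc : G.Connected) :
    outConnDomNum (middleGraph G) = n ↔ G.IsTree := by
  rw [← Nat.card_eq_fintype_card] at hn
  subst hn
  constructor
  · intro h
    by_contra hT
    obtain ⟨v, w, hvw, hb⟩ : ∃ v w, G.Adj v w ∧ ¬ G.IsBridge s(v, w) := by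
      simpa [isAcyclic_iff_forall_adj_isBridge] using fun hG => hT ⟨hc, hG⟩
    have := outConnDomNum_le (isOuterConnDomSet_middleGraph_swapEdgeSet hc hvw hb)
    have := ncard_swapEdgeSet_add_one hvw
    omega
  · intro hT
    have : Nontrivial V := Finite.one_lt_card_iff_nontrivial.1 (by omega)
    obtain ⟨w, hvw⟩ := hc.preconnected.exists_adj_of_nontrivial (Classical.arbitrary V)
    have hS := isOuterConnDomSet_middleGraph_range_inl hc ⟨s(_, w), hvw⟩
    refine le_antisymm ?_ (le_outConnDomNum ⟨_, hS⟩ fun S hS =>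
      card_le_ncard_of_isAcyclic hT.isAcyclic hS.1 hS.2.preconnected)
    exact (outConnDomNum_le hS).trans_eq (ncard_range_of_injective inl_injective)
end

section
/- For any cycle C_n of order n ≥ 3, the outer-connected domination number of the middle graph satisfies γ̃_c(M(C_n)) = n − 1. -/
open SimpleGraph

/-! The vertices of `C_n` other than `0, 1`, together with the edge `{0, 1}`, dominate `M(C_n)`,
and the rest of `M(C_n)` is a path, so `γ̃_c(M(C_n)) ≤ n - 1`.

Conversely, let `S` be an outer-connected dominating set. Connectivity of `M(C_n) - S` forces the
edges of `C_n` outside `S` to form a single arc (possibly empty or the whole cycle), so at most one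
edge `{x, x + 1} ∉ S` has its predecessor `{x - 1, x}` in `S`. A vertex `v ∉ S` is dominated by
`{v, v + 1}` or by `{v - 1, v}`, and in the second case either `{v, v + 1} ∈ S` as well or `v` is
that unique first vertex of the arc. Hence `#(V ∖ S) ≤ #(E ∩ S) + 1`, i.e. `#S ≥ n - 1`. -/

open Fin.NatCast Fin.CommRing

lemma SimpleGraph.Preconnected.of_adj_closed {W : Type*} {H : SimpleGraph W}
    (hH : H.Preconnected) {P : W → Prop} (hP : ∀ u v, H.Adj u v → P u → P v)
    (u v : W) (hu : P u) : P v := by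
  obtain ⟨p⟩ := hH u v
  induction p with
  | nil => exact hu
  | cons h _ ih => exact ih (hP _ _ h hu)

section MiddleGraph

variable {V : Type*} {G : SimpleGraph V}

@[simp] lemma middleGraph_adj_inr_inl {v : V} {e : G.edgeSet} :
    (middleGraph G).Adj (.inr e) (.inl v) ↔ v ∈ (e : Sym2 V) := Iff.rfl

lemma middleGraph_edge_mem_of_closed {S : Set (V ⊕ G.edgeSet)}
    (hS : ((middleGraph G).induce Sᶜ).Preconnected) {F : Set G.edgeSet}
    (hF : ∀ e ∈ F, ∀ f : G.edgeSet, .inr f ∉ S → ∀ v ∈ (e : Sym2 V), v ∈ (f : Sym2 V) → f ∈ F)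
    {e f : G.edgeSet} (he : e ∈ F) (heS : .inr e ∉ S) (hfS : .inr f ∉ S) : f ∈ F := by
  let P : ↥Sᶜ → Prop := fun w => match w.1 with
    | .inl v => ∃ e ∈ F, v ∈ (e : Sym2 V)
    | .inr e => e ∈ F
  refine hS.of_adj_closed (P := P) ?_ ⟨.inr e, heS⟩ ⟨.inr f, hfS⟩ he
  rintro ⟨v | e, _⟩ ⟨w | f, hf⟩ hadj hP
  · exact hadj.elim
  · obtain ⟨e, he, hve⟩ := hP
    exact hF e he f hf v hve hadj
  · exact ⟨e, hP, hadj⟩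
  · obtain ⟨-, v, hve, hvf⟩ := hadj
    exact hF e hP f hf v hve hvf

end MiddleGraph

/-- `R` is the maximal run `x, x + 1, …, x + (d - 1)` of elements of `T`. -/
lemma Fin.exists_run_of_sub_one_notMem {n : ℕ} [NeZero n] {T : Set (Fin n)} {x : Fin n}
    (hx : x ∈ T) (hx' : x - 1 ∉ T) :
    ∃ R ⊆ T, x ∈ R ∧ (∀ a ∈ R, a + 1 ∈ T → a + 1 ∈ R) ∧ (∀ a ∈ R, a - 1 ∈ T → a - 1 ∈ R) ∧
      ∀ y ∈ R, y - 1 ∉ T → y = x := by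
  classical
  have hex : ∃ t : ℕ, x + t ∉ T :=
    ⟨((-1 : Fin n) : ℕ), by rwa [Fin.cast_val_eq_self, ← sub_eq_add_neg]⟩
  set d := Nat.find hex
  have hd : x + d ∉ T := Nat.find_spec hex
  have hlt : ∀ t < d, x + t ∈ T := fun t ht => not_not.mp (Nat.find_min hex ht)
  have hd0 : d ≠ 0 := by rintro h; exact hd (by simpa [h] using hx)
  refine ⟨(fun t : ℕ => x + t) '' Set.Iio d, ?_, ⟨0, Nat.pos_of_ne_zero hd0, by simp⟩, ?_, ?_, ?_⟩
  · rintro _ ⟨t, ht, rfl⟩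
    exact hlt t ht
  · rintro _ ⟨t, ht, rfl⟩ hT
    refine ⟨t + 1, ?_, by push_cast; ring⟩
    have : t + 1 ≠ d := by rintro h; exact hd (by rw [← h]; push_cast; rwa [← add_assoc])
    exact lt_of_le_of_ne (Nat.succ_le_of_lt ht) this
  · rintro _ ⟨t, ht, rfl⟩ hT
    obtain _ | t := t
    · exact absurd (by simpa using hT) hx'
    · exact ⟨t, by simp only [Set.mem_Iio] at ht ⊢; omega, by push_cast; ring⟩
  · rintro _ ⟨t, ht, rfl⟩ hT
    obtain _ | t := t
    · simp
    · refine absurd ?_ hT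
      rw [show x + ((t + 1 : ℕ) : Fin n) - 1 = x + t by push_cast; ring]
      exact hlt t (by simp only [Set.mem_Iio] at ht; omega)

lemma Set.ncard_eq_ncard_preimage_inl_add_ncard_preimage_inr {α β : Type*} [Finite α] [Finite β]
    (S : Set (α ⊕ β)) : S.ncard = (Sum.inl ⁻¹' S).ncard + (Sum.inr ⁻¹' S).ncard := by
  conv_lhs => rw [← Set.image_preimage_inl_union_image_preimage_inr S]
  rw [Set.ncard_union_eq Set.disjoint_image_inl_image_inr,
    Set.ncard_image_of_injective _ Sum.inl_injective,
    Set.ncard_image_of_injective _ Sum.inr_injective]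

section Cycle

variable {m : ℕ}

def cycleEdge (m : ℕ) (i : Fin (m + 3)) : (cycleGraph (m + 3)).edgeSet :=
  ⟨s(i, i + 1), by simp [cycleGraph_adj]⟩

lemma mem_cycleEdge {v i : Fin (m + 3)} :
    v ∈ (cycleEdge m i : Sym2 (Fin (m + 3))) ↔ v = i ∨ v = i + 1 :=
  Sym2.mem_iff

lemma cycleEdge_injective : Function.Injective (cycleEdge m) := by
  intro i j h
  rcases Sym2.eq_iff.mp (congrArg Subtype.val h) with ⟨h, -⟩ | ⟨h₁, h₂⟩
  · exact h
  · have : (2 : Fin (m + 3)) = 0 := by linear_combination h₂ - h₁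
    simp [Fin.ext_iff, Nat.mod_eq_of_lt (show 2 < m + 3 by omega)] at this

lemma cycleEdge_surjective : Function.Surjective (cycleEdge m) := by
  rintro ⟨e, he⟩
  induction e using Sym2.ind with
  | _ u v =>
    rcases (cycleGraph_adj.mp he) with h | h
    · exact ⟨v, Subtype.ext (by simp [cycleEdge, ← h, Sym2.eq_swap])⟩
    · exact ⟨u, Subtype.ext (by simp [cycleEdge, ← h])⟩

lemma eq_of_mem_cycleEdge_of_mem_cycleEdge {v i j : Fin (m + 3)}
    (hi : v ∈ (cycleEdge m i : Sym2 (Fin (m + 3))))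
    (hj : v ∈ (cycleEdge m j : Sym2 (Fin (m + 3)))) :
    j = i ∨ j = i + 1 ∨ j = i - 1 := by
  rw [mem_cycleEdge] at hi hj
  rcases hi with hi | hi <;> rcases hj with hj | hj
  · exact .inl (hj.symm.trans hi)
  · exact .inr (.inr (eq_sub_of_add_eq (hj.symm.trans hi)))
  · exact .inr (.inl (hj.symm.trans hi))
  · exact .inl (add_right_cancel (hj.symm.trans hi))

/-- Connectivity of `M(C_n) - S` forces the edges of `C_n` outside `S` to form a single arc, which
has a single first edge. -/
lemma subsingleton_setOf_cycleEdge_notMem_of_pred_mem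
    {S : Set (Fin (m + 3) ⊕ (cycleGraph (m + 3)).edgeSet)}
    (hS : ((middleGraph (cycleGraph (m + 3))).induce Sᶜ).Preconnected) :
    {x | .inr (cycleEdge m x) ∉ S ∧ .inr (cycleEdge m (x - 1)) ∈ S}.Subsingleton := by
  rintro x ⟨hx, hx'⟩ y ⟨hy, hy'⟩
  obtain ⟨R, hRT, hxR, hsucc, hpred, hstart⟩ :=
    Fin.exists_run_of_sub_one_notMem (T := {i | .inr (cycleEdge m i) ∉ S}) hx (not_not.mpr hx')
  have hclosed : ∀ e ∈ cycleEdge m '' R, ∀ f : (cycleGraph (m + 3)).edgeSet, .inr f ∉ S →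
      ∀ v ∈ (e : Sym2 (Fin (m + 3))), v ∈ (f : Sym2 (Fin (m + 3))) → f ∈ cycleEdge m '' R := by
    rintro _ ⟨a, ha, rfl⟩ f hf v hva hvf
    obtain ⟨b, rfl⟩ := cycleEdge_surjective f
    refine ⟨b, ?_, rfl⟩
    rcases eq_of_mem_cycleEdge_of_mem_cycleEdge hva hvf with rfl | rfl | rfl
    exacts [ha, hsucc a ha hf, hpred a ha hf]
  have hyR : cycleEdge m y ∈ cycleEdge m '' R :=
    middleGraph_edge_mem_of_closed hS hclosed ⟨x, hxR, rfl⟩ hx hy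
  exact (hstart y (cycleEdge_injective.mem_set_image.mp hyR) (not_not.mpr hy')).symm

lemma le_ncard_of_isDomSet_of_preconnected {S : Set (Fin (m + 3) ⊕ (cycleGraph (m + 3)).edgeSet)}
    (hdom : IsDomSet (middleGraph (cycleGraph (m + 3))) S)
    (hS : ((middleGraph (cycleGraph (m + 3))).induce Sᶜ).Preconnected) :
    m + 2 ≤ S.ncard := by
  set A : Set (Fin (m + 3)) := Sum.inl ⁻¹' S
  set B : Set (Fin (m + 3)) := {i | .inr (cycleEdge m i) ∈ S}
  set L : Set (Fin (m + 3)) := {x | .inr (cycleEdge m x) ∉ S ∧ .inr (cycleEdge m (x - 1)) ∈ S}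
  have hcard : S.ncard = A.ncard + B.ncard := by
    rw [Set.ncard_eq_ncard_preimage_inl_add_ncard_preimage_inr,
      ← Set.ncard_preimage_of_injective_subset_range cycleEdge_injective
        (by simp [cycleEdge_surjective.range_eq])]
    rfl
  have hAc : Aᶜ ⊆ B ∪ L := by
    intro v hv
    obtain ⟨u, hu, rfl | hadj⟩ := hdom (.inl v)
    · exact absurd hu hv
    obtain _ | e := u
    · exact hadj.elim
    · obtain ⟨i, rfl⟩ := cycleEdge_surjective e
      rcases mem_cycleEdge.mp hadj with rfl | rfl
      · exact .inl hu
      · by_cases hvB : i + 1 ∈ B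
        · exact .inl hvB
        · exact .inr ⟨hvB, by rwa [add_sub_cancel_right]⟩
  have hL : L.ncard ≤ 1 := Set.ncard_le_one_iff_subsingleton.mpr
    (subsingleton_setOf_cycleEdge_notMem_of_pred_mem hS)
  have hA : A.ncard + Aᶜ.ncard = m + 3 := by
    rw [Set.ncard_add_ncard_compl, Nat.card_eq_fintype_card, Fintype.card_fin]
  have := (Set.ncard_le_ncard hAc).trans (Set.ncard_union_le B L)
  omega

lemma middleGraph_adj_cycleEdge_add_one (i : Fin (m + 3)) :
    (middleGraph (cycleGraph (m + 3))).Adj (.inr (cycleEdge m i)) (.inr (cycleEdge m (i + 1))) :=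
  ⟨fun h => one_ne_zero (left_eq_add.mp (cycleEdge_injective h)),
    i + 1, mem_cycleEdge.mpr (.inr rfl), mem_cycleEdge.mpr (.inl rfl)⟩

def cycleMiddleOuterDomSet (m : ℕ) : Set (Fin (m + 3) ⊕ (cycleGraph (m + 3)).edgeSet) :=
  Sum.inl '' {0, 1}ᶜ ∪ {.inr (cycleEdge m 0)}

lemma isDomSet_cycleMiddleOuterDomSet :
    IsDomSet (middleGraph (cycleGraph (m + 3))) (cycleMiddleOuterDomSet m) := by
  have h2 : (2 : Fin (m + 3)) ∉ ({0, 1} : Set (Fin (m + 3))) := by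
    simp [Fin.ext_iff, Nat.mod_eq_of_lt (show 2 < m + 3 by omega)]
  rintro (v | e)
  · by_cases hv : v ∈ ({0, 1} : Set (Fin (m + 3)))
    · refine ⟨.inr (cycleEdge m 0), by simp [cycleMiddleOuterDomSet], .inr ?_⟩
      simpa [mem_cycleEdge] using hv
    · exact ⟨.inl v, .inl ⟨v, hv, rfl⟩, .inl rfl⟩
  · obtain ⟨i, rfl⟩ := cycleEdge_surjective e
    by_cases h0 : i = 0
    · exact ⟨.inr (cycleEdge m 0), .inr rfl, .inl (by rw [h0])⟩
    by_cases h1 : i = 1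
    · refine ⟨.inl 2, .inl ⟨2, h2, rfl⟩, .inr (mem_cycleEdge.mpr (.inr ?_))⟩
      rw [h1, one_add_one_eq_two]
    · exact ⟨.inl i, .inl ⟨i, by simp [h0, h1], rfl⟩, .inr (mem_cycleEdge.mpr (.inl rfl))⟩

/-- The complement is the path `1, {1,2}, {2,3}, …, {n-1,0}, 0` of `M(C_n)`; `φ` parametrizes
its edge part. -/
lemma connected_induce_compl_cycleMiddleOuterDomSet :
    ((middleGraph (cycleGraph (m + 3))).induce (cycleMiddleOuterDomSet m)ᶜ).Connected := by
  have hmem : ∀ k : Fin (m + 2), .inr (cycleEdge m k.succ) ∈ (cycleMiddleOuterDomSet m)ᶜ :=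
    fun k => by simp [cycleMiddleOuterDomSet, cycleEdge_injective.eq_iff, Fin.succ_ne_zero]
  have hsucc : ∀ k l : Fin (m + 2), (k : ℕ) + 1 = l → l.succ = k.succ + 1 := by
    intro k l h
    ext
    have := l.isLt
    rw [Fin.val_add_one_of_lt (by simp [Fin.lt_def]; omega)]
    simp [h]
  let φ : pathGraph (m + 2) →g
      (middleGraph (cycleGraph (m + 3))).induce (cycleMiddleOuterDomSet m)ᶜ :=
    { toFun := fun k => ⟨.inr (cycleEdge m k.succ), hmem k⟩
      map_rel' := by
        intro k l hkl
        show (middleGraph _).Adj (.inr (cycleEdge m k.succ)) (.inr (cycleEdge m l.succ))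
        rcases pathGraph_adj.mp hkl with h | h
        · rw [hsucc k l h]
          exact middleGraph_adj_cycleEdge_add_one k.succ
        · rw [hsucc l k h]
          exact (middleGraph_adj_cycleEdge_add_one l.succ).symm }
  have hreach : ∀ k, ((middleGraph (cycleGraph (m + 3))).induce
      (cycleMiddleOuterDomSet m)ᶜ).Reachable (φ 0) (φ k) :=
    fun k => (pathGraph_preconnected _ 0 k).map φ
  refine (connected_iff_exists_forall_reachable _).mpr ⟨φ 0, ?_⟩
  rintro ⟨v | e, hw⟩
  · have hv : v = 0 ∨ v = 1 := by simpa [cycleMiddleOuterDomSet, or_iff_not_imp_left] using hw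
    rcases hv with rfl | rfl
    · refine (hreach (Fin.last _)).trans (Adj.reachable ?_)
      show (middleGraph _).Adj (.inr (cycleEdge m (Fin.last _))) (.inl 0)
      simp [mem_cycleEdge]
    · refine Adj.reachable ?_
      show (middleGraph _).Adj (.inr (cycleEdge m 1)) (.inl 1)
      simp [mem_cycleEdge]
  · obtain ⟨i, rfl⟩ := cycleEdge_surjective e
    have hi : i ≠ 0 := by simpa [cycleMiddleOuterDomSet, cycleEdge_injective.eq_iff] using hw
    obtain ⟨k, rfl⟩ := Fin.exists_succ_eq.mpr hi
    exact hreach k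

lemma ncard_cycleMiddleOuterDomSet : (cycleMiddleOuterDomSet m).ncard = m + 2 := by
  have hinl : Sum.inl ⁻¹' cycleMiddleOuterDomSet m = ({0, 1} : Set (Fin (m + 3)))ᶜ := by
    ext; simp [cycleMiddleOuterDomSet]
  have hinr : Sum.inr ⁻¹' cycleMiddleOuterDomSet m = {cycleEdge m 0} := by
    ext; simp [cycleMiddleOuterDomSet]
  rw [Set.ncard_eq_ncard_preimage_inl_add_ncard_preimage_inr, hinl, hinr, Set.ncard_singleton,
    Set.ncard_compl, Set.ncard_pair (by simp), Nat.card_eq_fintype_card,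
    Fintype.card_fin]
  omega

end Cycle

theorem stmt7 (n : ℕ) (h3 : 3 ≤ n) :
    outConnDomNum (middleGraph (SimpleGraph.cycleGraph n)) = n - 1 := by
  obtain ⟨m, rfl⟩ : ∃ m, n = m + 3 := ⟨n - 3, by omega⟩
  have hmem : m + 2 ∈ {k | ∃ S, IsDomSet (middleGraph (cycleGraph (m + 3))) S ∧
      ((middleGraph (cycleGraph (m + 3))).induce Sᶜ).Connected ∧ S.ncard = k} :=
    ⟨_, isDomSet_cycleMiddleOuterDomSet, connected_induce_compl_cycleMiddleOuterDomSet,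
      ncard_cycleMiddleOuterDomSet⟩
  refine le_antisymm (Nat.sInf_le hmem) (le_csInf ⟨_, hmem⟩ ?_)
  rintro k ⟨S, hdom, hconn, rfl⟩
  exact le_ncard_of_isDomSet_of_preconnected hdom hconn.preconnected
end

section
/- For any wheel graph W_n of order n ≥ 4 (a hub joined to a cycle on n − 1 vertices), the outer-connected domination number of the middle graph satisfies γ̃_c(M(W_n)) = ⌈n/2⌉. -/
open SimpleGraph

/-!
A dominating set of `M(G)` has to dominate every vertex of `G`, and a vertex of `M(G)`
dominates at most two of them (itself, or the two endpoints of an edge), so it has at least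
`⌈|V| / 2⌉` elements. Conversely, the edges of an edge cover `D` of `G` dominate `M(G)`, and
their complement is connected as soon as `G - D` is. In the wheel, the spoke at the rim vertex
`0` together with the rim edges `{2i+1, 2i+2}` is an edge cover of size `⌈n / 2⌉`, and the
remaining spokes keep `G - D` connected through the hub.
-/

theorem outConnDomNum_eq_of_isDomSet {V : Type*} {H : SimpleGraph V} {S : Set V}
    (hS : IsDomSet H S) (hconn : (H.induce Sᶜ).Connected)
    (hmin : ∀ T, IsDomSet H T → S.ncard ≤ T.ncard) : outConnDomNum H = S.ncard :=
  le_antisymm (Nat.sInf_le ⟨S, hS, hconn, rfl⟩)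
    (le_csInf ⟨_, S, hS, hconn, rfl⟩ fun _ ⟨T, hT, _, hk⟩ => hk ▸ hmin T hT)

namespace middleGraph

variable {V : Type*} {G : SimpleGraph V}

lemma ncard_dominated_inl_le_two [Finite V] (x : V ⊕ G.edgeSet) :
    {v : V | x = Sum.inl v ∨ (middleGraph G).Adj x (Sum.inl v)}.ncard ≤ 2 := by
  rcases x with w | ⟨e, -⟩
  · calc _ ≤ ({w} : Set V).ncard := Set.ncard_le_ncard fun v hv => by
          rcases hv with h | h
          · exact (Sum.inl_injective h).symm
          · exact h.elim
      _ ≤ 2 := by simp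
  · induction e using Sym2.ind with
    | h a b =>
      calc _ ≤ ({a, b} : Set V).ncard := Set.ncard_le_ncard fun v hv => by
            rcases hv with h | h
            · exact absurd h Sum.inr_ne_inl
            · exact Sym2.mem_iff.mp h
        _ ≤ 2 := (Set.ncard_insert_le _ _).trans (by simp)

theorem card_le_two_mul_ncard_of_isDomSet [Fintype V] {S : Set (V ⊕ G.edgeSet)}
    (hS : IsDomSet (middleGraph G) S) : Fintype.card V ≤ 2 * S.ncard := by
  classical
  choose d hdS hd using fun v => hS (Sum.inl v)
  have hfiber : ∀ x ∈ Finset.univ.image d, (Finset.univ.filter (d · = x)).card ≤ 2 := by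
    intro x _
    rw [← Set.ncard_coe_finset]
    refine le_trans (Set.ncard_le_ncard fun v hv => ?_) (ncard_dominated_inl_le_two x)
    simp only [Finset.coe_filter, Finset.mem_univ, true_and, Set.mem_ofPred_eq] at hv
    exact hv ▸ hd v
  have himage : (Finset.univ.image d).card ≤ S.ncard := by
    rw [← Set.ncard_coe_finset]
    exact Set.ncard_le_ncard (by simpa [Set.subset_def] using hdS)
  calc Fintype.card V ≤ 2 * (Finset.univ.image d).card := Finset.card_le_mul_card_image _ 2 hfiber
    _ ≤ 2 * S.ncard := by omega

variable (G) in
def edgeVertexSet (D : Set (Sym2 V)) : Set (V ⊕ G.edgeSet) :=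
  Sum.inr '' (Subtype.val ⁻¹' D)

lemma ncard_edgeVertexSet {D : Set (Sym2 V)} (hD : D ⊆ G.edgeSet) :
    (edgeVertexSet G D).ncard = D.ncard := by
  rw [edgeVertexSet, Set.ncard_image_of_injective _ Sum.inr_injective,
    Set.ncard_preimage_of_injective_subset_range Subtype.val_injective (by simpa using hD)]

theorem isDomSet_edgeVertexSet {D : Set (Sym2 V)} (hD : D ⊆ G.edgeSet)
    (hcover : ∀ v, ∃ e ∈ D, v ∈ e) : IsDomSet (middleGraph G) (edgeVertexSet G D) := by
  have hcover' (v : V) : ∃ e : G.edgeSet, (e : Sym2 V) ∈ D ∧ v ∈ (e : Sym2 V) :=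
    let ⟨e, he, hv⟩ := hcover v
    ⟨⟨e, hD he⟩, he, hv⟩
  rintro (v | f)
  · obtain ⟨e, he, hv⟩ := hcover' v
    exact ⟨Sum.inr e, ⟨e, he, rfl⟩, Or.inr hv⟩
  · by_cases hf : (f : Sym2 V) ∈ D
    · exact ⟨Sum.inr f, ⟨f, hf, rfl⟩, Or.inl rfl⟩
    · obtain ⟨a, ha⟩ : ∃ a, a ∈ (f : Sym2 V) := ⟨_, Sym2.out_fst_mem _⟩
      obtain ⟨e, he, hae⟩ := hcover' a
      exact ⟨Sum.inr e, ⟨e, he, rfl⟩, Or.inr ⟨fun h => hf (h ▸ he), a, hae, ha⟩⟩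

theorem connected_induce_compl_edgeVertexSet {D : Set (Sym2 V)}
    (hconn : (G.deleteEdges D).Connected) :
    ((middleGraph G).induce (edgeVertexSet G D)ᶜ).Connected := by
  set H := (middleGraph G).induce (edgeVertexSet G D)ᶜ
  have hinl (v : V) : Sum.inl v ∈ (edgeVertexSet G D)ᶜ := by simp [edgeVertexSet]
  let ι (v : V) : ↥(edgeVertexSet G D)ᶜ := ⟨Sum.inl v, hinl v⟩
  have hinr {e : G.edgeSet} (he : (e : Sym2 V) ∉ D) : Sum.inr e ∈ (edgeVertexSet G D)ᶜ := by
    simpa [edgeVertexSet] using he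
  -- an edge `uv` of `G - D` is a common neighbour of `u` and `v` in the complement
  have hadj {u v : V} (h : (G.deleteEdges D).Adj u v) : H.Reachable (ι u) (ι v) := by
    rw [deleteEdges_adj] at h
    let e : G.edgeSet := ⟨s(u, v), h.1⟩
    have hu : H.Adj (ι u) ⟨Sum.inr e, hinr h.2⟩ := Sym2.mem_mk_left u v
    have hv : H.Adj ⟨Sum.inr e, hinr h.2⟩ (ι v) := Sym2.mem_mk_right u v
    exact hu.reachable.trans hv.reachable
  have hreach (u v : V) : H.Reachable (ι u) (ι v) := by
    obtain ⟨p⟩ := hconn.preconnected u v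
    induction p with
    | nil => rfl
    | cons h _ ih => exact (hadj h).trans ih
  obtain ⟨v₀⟩ := hconn.nonempty
  refine (connected_iff_exists_forall_reachable H).2 ⟨ι v₀, ?_⟩
  rintro ⟨v | e, hx⟩
  · exact hreach v₀ v
  · obtain ⟨a, ha⟩ : ∃ a, a ∈ (e : Sym2 V) := ⟨_, Sym2.out_fst_mem _⟩
    have hae : H.Adj (ι a) ⟨Sum.inr e, hx⟩ := ha
    exact (hreach v₀ a).trans hae.reachable

theorem outConnDomNum_eq [Fintype V] {D : Set (Sym2 V)} (hD : D ⊆ G.edgeSet)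
    (hcover : ∀ v, ∃ e ∈ D, v ∈ e) (hconn : (G.deleteEdges D).Connected)
    (hcard : D.ncard = (Fintype.card V + 1) / 2) :
    outConnDomNum (middleGraph G) = (Fintype.card V + 1) / 2 := by
  rw [← hcard, ← ncard_edgeVertexSet hD]
  refine outConnDomNum_eq_of_isDomSet (isDomSet_edgeVertexSet hD hcover)
    (connected_induce_compl_edgeVertexSet hconn) fun T hT => ?_
  have := card_le_two_mul_ncard_of_isDomSet hT
  rw [ncard_edgeVertexSet hD]
  omega

end middleGraph

lemma ZMod.natCast_ne_zero_of_pos_of_lt {m a : ℕ} (ha : 0 < a) (h : a < m) :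
    (a : ZMod m) ≠ 0 := by
  rw [Ne, ZMod.natCast_eq_zero_iff]
  exact fun hdvd => absurd (Nat.le_of_dvd ha hdvd) (by omega)

namespace wheelGraph

variable {m : ℕ}

def rimEdge (i : ℕ) : Sym2 (Option (ZMod m)) :=
  s(some ((2 * i + 1 : ℕ) : ZMod m), some ((2 * i + 2 : ℕ) : ZMod m))

-- For odd `m` the rim edges match up `1, …, m - 1`; for even `m` the last one is `{m - 1, 0}`.
def edgeCover (m : ℕ) : Set (Sym2 (Option (ZMod m))) :=
  insert s(none, some 0) (rimEdge '' Set.Iio (m / 2))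

lemma edgeCover_subset_edgeSet (hm : 1 < m) : edgeCover m ⊆ (wheelGraph m).edgeSet := by
  have h1 : ((1 : ℕ) : ZMod m) ≠ 0 := ZMod.natCast_ne_zero_of_pos_of_lt one_pos hm
  rintro _ (rfl | ⟨i, -, rfl⟩)
  · trivial
  · refine ⟨fun h => h1 ?_, Or.inr ?_⟩
    · push_cast at h ⊢
      linear_combination -h
    · push_cast
      ring

lemma exists_mem_edgeCover [NeZero m] (v : Option (ZMod m)) : ∃ e ∈ edgeCover m, v ∈ e := by
  rcases v with _ | j
  · exact ⟨_, Set.mem_insert _ _, Sym2.mem_mk_left _ _⟩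
  obtain hj | hj := Nat.eq_zero_or_pos j.val
  · rw [ZMod.val_eq_zero] at hj
    exact ⟨_, Set.mem_insert _ _, hj ▸ Sym2.mem_mk_right _ _⟩
  -- the rim vertex with value `k ≥ 1` is an endpoint of the rim edge `(k - 1) / 2`
  have hi : (j.val - 1) / 2 < m / 2 := by have := j.val_lt; omega
  refine ⟨_, Set.mem_insert_of_mem _ ⟨_, hi, rfl⟩, ?_⟩
  rw [rimEdge, Sym2.mem_iff, Option.some_inj, Option.some_inj]
  obtain h | h : j.val = 2 * ((j.val - 1) / 2) + 1 ∨ j.val = 2 * ((j.val - 1) / 2) + 2 := by omega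
  · exact Or.inl (by rw [← h, ZMod.natCast_zmod_val])
  · exact Or.inr (by rw [← h, ZMod.natCast_zmod_val])

lemma ncard_edgeCover (hm : 3 ≤ m) : (edgeCover m).ncard = m / 2 + 1 := by
  have h2 : ((2 : ℕ) : ZMod m) ≠ 0 := ZMod.natCast_ne_zero_of_pos_of_lt two_pos hm
  have hinj : Set.InjOn (rimEdge (m := m)) (Set.Iio (m / 2)) := by
    intro i hi j hj h
    simp only [Set.mem_Iio] at hi hj
    rcases Sym2.eq_iff.mp h with ⟨h1, -⟩ | ⟨h1, h2'⟩
    · have := (ZMod.natCast_eq_natCast_iff' _ _ m).mp (Option.some_inj.mp h1)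
      rw [Nat.mod_eq_of_lt (by omega), Nat.mod_eq_of_lt (by omega)] at this
      omega
    · refine absurd ?_ h2
      have h1 := Option.some_inj.mp h1
      have h2' := Option.some_inj.mp h2'
      push_cast at h1 h2' ⊢
      linear_combination h2' - h1
  rw [edgeCover, Set.ncard_insert_of_notMem (by simp [rimEdge]), hinj.ncard_image,
    Set.ncard_eq_toFinset_card', Set.toFinset_Iio, Nat.card_Iio]

lemma connected_deleteEdges_edgeCover (hm : 3 ≤ m) :
    ((wheelGraph m).deleteEdges (edgeCover m)).Connected := by
  set G' := (wheelGraph m).deleteEdges (edgeCover m)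
  have h1 : (1 : ZMod m) ≠ 0 := by
    exact_mod_cast ZMod.natCast_ne_zero_of_pos_of_lt one_pos (by omega : 1 < m)
  have hspoke {j : ZMod m} (hj : j ≠ 0) : G'.Adj none (some j) := by
    refine deleteEdges_adj.2 ⟨trivial, ?_⟩
    rintro (h | ⟨i, -, h⟩)
    · simp [hj] at h
    · simp [rimEdge] at h
  have hrim : G'.Adj (some 1) (some 0) := by
    refine deleteEdges_adj.2 ⟨⟨h1, Or.inl (sub_zero 1)⟩, ?_⟩
    rintro (h | ⟨i, hi, h⟩)
    · simp at h
    rcases Sym2.eq_iff.mp h with ⟨ha, hb⟩ | ⟨ha, -⟩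
    · apply ZMod.natCast_ne_zero_of_pos_of_lt two_pos hm
      have ha := Option.some_inj.mp ha
      have hb := Option.some_inj.mp hb
      push_cast at ha hb ⊢
      linear_combination hb - ha
    · have := Set.mem_Iio.mp hi
      exact ZMod.natCast_ne_zero_of_pos_of_lt (by omega) (by omega) (Option.some_inj.mp ha)
  refine (connected_iff_exists_forall_reachable G').2 ⟨none, ?_⟩
  rintro (_ | j)
  · rfl
  by_cases hj : j = 0
  · exact hj ▸ (hspoke h1).reachable.trans hrim.reachable
  · exact (hspoke hj).reachable

end wheelGraph

theorem stmt8 (n : ℕ) (h4 : 4 ≤ n) :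
    outConnDomNum (middleGraph (wheelGraph (n - 1))) = (n + 1) / 2 := by
  have hm : 3 ≤ n - 1 := by omega
  have : NeZero (n - 1) := ⟨by omega⟩
  have hcard : Fintype.card (Option (ZMod (n - 1))) = n := by
    rw [Fintype.card_option, ZMod.card]
    omega
  have h := middleGraph.outConnDomNum_eq (wheelGraph.edgeCover_subset_edgeSet (by omega))
    wheelGraph.exists_mem_edgeCover (wheelGraph.connected_deleteEdges_edgeCover hm)
    (by rw [wheelGraph.ncard_edgeCover hm, hcard]; omega)
  rwa [hcard] at h
end

section
/- For any wheel graph W_n of order n ≥ 5, γ̃_c(L(W_n)) < γ̃_c(M(W_n)), where L is the line graph and M the middle graph. -/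
/-!
In `L(W_n)` take spoke `0` together with every third rim edge `3j + 2`. The spoke dominates all
spokes and the two rim edges at rim vertex `0`, each chosen rim edge dominates its two rim
neighbours, and the remaining edges stay connected through the hub; so
`γ̃_c(L(W_n)) ≤ ⌊(n - 1)/3⌋ + 1`. In `M(G)` a vertex of `G` is dominated only by itself or by an
incident edge, and any element of `M(G)` dominates at most two vertices of `G`; so every
dominating set of `M(G)` has at least `|V(G)|/2` elements, and `γ̃_c(M(W_n)) ≥ n/2`. Finally
`2(⌊(n - 1)/3⌋ + 1) < n` for `n ≥ 5`.
-/

open SimpleGraph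

section OuterConnectedDomination

variable {W : Type*} {H : SimpleGraph W}

lemma outConnDomNum_le_s18 {S : Set W} (hS : IsDomSet H S) (hc : (H.induce Sᶜ).Connected) :
    outConnDomNum H ≤ S.ncard :=
  Nat.sInf_le ⟨S, hS, hc, rfl⟩

lemma isDomSet_compl_singleton {x y : W} (hxy : H.Adj x y) : IsDomSet H {x}ᶜ := by
  intro v
  by_cases hv : v = x
  · exact ⟨y, hxy.ne.symm, Or.inr (hv ▸ hxy.symm)⟩
  · exact ⟨v, hv, Or.inl rfl⟩

lemma exists_ncard_eq_outConnDomNum {x y : W} (hxy : H.Adj x y) :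
    ∃ S, IsDomSet H S ∧ (H.induce Sᶜ).Connected ∧ S.ncard = outConnDomNum H :=
  Nat.sInf_mem (s := {k | ∃ S : Set W, IsDomSet H S ∧ (H.induce Sᶜ).Connected ∧ S.ncard = k})
    ⟨_, {x}ᶜ, isDomSet_compl_singleton hxy,
      by rw [compl_compl, induce_singleton_eq_top]; exact connected_top, rfl⟩

end OuterConnectedDomination

section MiddleGraph

variable {V : Type*} {G : SimpleGraph V}

lemma ncard_setOf_eq_or_middleGraph_adj_le_two (u : V ⊕ G.edgeSet) :
    {v : V | u = Sum.inl v ∨ (middleGraph G).Adj u (Sum.inl v)}.ncard ≤ 2 := by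
  rcases u with w | ⟨e, he⟩
  · calc _ ≤ ({w} : Set V).ncard :=
          Set.ncard_le_ncard fun v hv => by simpa [middleGraph] using hv
      _ ≤ 2 := by simp
  · induction e using Sym2.ind with
    | _ x y =>
      calc _ ≤ ({x, y} : Set V).ncard :=
            Set.ncard_le_ncard fun v hv => by simpa [middleGraph] using hv
        _ ≤ 2 := (Set.ncard_insert_le x {y}).trans (by simp)

lemma natCard_le_two_mul_ncard_of_isDomSet_middleGraph [Finite V]
    {S : Set (V ⊕ G.edgeSet)} (hS : IsDomSet (middleGraph G) S) :
    Nat.card V ≤ 2 * S.ncard := by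
  set D := fun u : V ⊕ G.edgeSet => {v : V | u = Sum.inl v ∨ (middleGraph G).Adj u (Sum.inl v)}
  have hfin : S.Finite := S.toFinite
  have hcover : (Set.univ : Set V) ⊆ ⋃ u ∈ hfin.toFinset, D u := by
    intro v _
    obtain ⟨u, hu, huv⟩ := hS (Sum.inl v)
    exact Set.mem_biUnion (hfin.mem_toFinset.mpr hu) huv
  calc Nat.card V = (Set.univ : Set V).ncard := Set.ncard_univ V |>.symm
    _ ≤ (⋃ u ∈ hfin.toFinset, D u).ncard := Set.ncard_le_ncard hcover
    _ ≤ ∑ u ∈ hfin.toFinset, (D u).ncard := Finset.set_ncard_biUnion_le _ _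
    _ ≤ ∑ _u ∈ hfin.toFinset, 2 :=
        Finset.sum_le_sum fun u _ => ncard_setOf_eq_or_middleGraph_adj_le_two u
    _ = 2 * S.ncard := by
        rw [Finset.sum_const, smul_eq_mul, Set.ncard_eq_toFinset_card S hfin, mul_comm]

lemma natCard_le_two_mul_outConnDomNum_middleGraph [Finite V] {x y : V} (hxy : G.Adj x y) :
    Nat.card V ≤ 2 * outConnDomNum (middleGraph G) := by
  have hxe : (middleGraph G).Adj (Sum.inl x) (Sum.inr ⟨s(x, y), hxy⟩) := Sym2.mem_mk_left x y
  obtain ⟨S, hS, -, hcard⟩ := exists_ncard_eq_outConnDomNum hxe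
  exact hcard ▸ natCard_le_two_mul_ncard_of_isDomSet_middleGraph hS

end MiddleGraph

lemma SimpleGraph.eq_or_lineGraph_adj {V : Type*} {G : SimpleGraph V} {e f : G.edgeSet} {v : V}
    (he : v ∈ (e : Sym2 V)) (hf : v ∈ (f : Sym2 V)) : e = f ∨ G.lineGraph.Adj e f := by
  by_cases hef : e = f
  · exact Or.inl hef
  · exact Or.inr (lineGraph_adj_iff_exists.mpr ⟨hef, v, he, hf⟩)

lemma SimpleGraph.reachable_induce_of_eq_or_adj {W : Type*} {H : SimpleGraph W} {s : Set W}
    {a b : s} (h : (a : W) = b ∨ H.Adj a b) : (H.induce s).Reachable a b := by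
  rcases h with h | h
  · exact Subtype.ext h ▸ Reachable.refl a
  · exact (induce_adj.mpr h).reachable

namespace WheelGraph

variable (m : ℕ)

def spoke (i : ZMod m) : (wheelGraph m).edgeSet :=
  ⟨s(none, some i), trivial⟩

def rim [Fact (1 < m)] (i : ZMod m) : (wheelGraph m).edgeSet :=
  ⟨s(some i, some (i + 1)), by simp, Or.inr (add_sub_cancel_left i 1)⟩

variable {m}

@[simp] lemma none_mem_spoke (i : ZMod m) : none ∈ (spoke m i : Sym2 (Option (ZMod m))) :=
  Sym2.mem_mk_left _ _

@[simp] lemma some_mem_spoke (i : ZMod m) : some i ∈ (spoke m i : Sym2 (Option (ZMod m))) :=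
  Sym2.mem_mk_right _ _

lemma spoke_injective : Function.Injective (spoke m) := fun i j h => by
  simpa [spoke] using congrArg Subtype.val h

variable [Fact (1 < m)]

@[simp] lemma none_notMem_rim (i : ZMod m) : none ∉ (rim m i : Sym2 (Option (ZMod m))) := by
  simp [rim]

@[simp] lemma left_mem_rim (i : ZMod m) : some i ∈ (rim m i : Sym2 (Option (ZMod m))) :=
  Sym2.mem_mk_left _ _

@[simp] lemma right_mem_rim (i : ZMod m) : some (i + 1) ∈ (rim m i : Sym2 (Option (ZMod m))) :=
  Sym2.mem_mk_right _ _

lemma spoke_ne_rim (i j : ZMod m) : spoke m i ≠ rim m j := fun h =>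
  none_notMem_rim j (h ▸ none_mem_spoke i)

lemma spoke_or_rim (e : (wheelGraph m).edgeSet) :
    (∃ i, e = spoke m i) ∨ ∃ i, e = rim m i := by
  obtain ⟨z, hz⟩ := e
  induction z using Sym2.ind with
  | _ x y =>
    match x, y, hz with
    | none, some i, _ => exact Or.inl ⟨i, rfl⟩
    | some i, none, _ => exact Or.inl ⟨i, Subtype.ext Sym2.eq_swap⟩
    | some i, some j, hz =>
      rcases hz.2 with h | h
      · rw [sub_eq_iff_eq_add'] at h
        exact Or.inr ⟨j, Subtype.ext (by simp [rim, h, Sym2.eq_swap])⟩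
      · rw [sub_eq_iff_eq_add'] at h
        exact Or.inr ⟨i, Subtype.ext (by simp [rim, h])⟩

lemma connected_induce_compl {S : Set (wheelGraph m).edgeSet} (hS : ∀ i ≠ 0, spoke m i ∉ S) :
    ((wheelGraph m).lineGraph.induce Sᶜ).Connected := by
  let base : ↥Sᶜ := ⟨spoke m 1, hS 1 one_ne_zero⟩
  have to_spoke : ∀ i (hi : spoke m i ∈ Sᶜ),
      ((wheelGraph m).lineGraph.induce Sᶜ).Reachable base ⟨spoke m i, hi⟩ := fun i _ =>
    reachable_induce_of_eq_or_adj (eq_or_lineGraph_adj (none_mem_spoke 1) (none_mem_spoke i))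
  refine (connected_iff_exists_forall_reachable _).2 ⟨base, ?_⟩
  rintro ⟨e, he⟩
  rcases spoke_or_rim e with ⟨i, rfl⟩ | ⟨i, rfl⟩
  · exact to_spoke i he
  · by_cases hi : i = 0
    · subst hi
      exact reachable_induce_of_eq_or_adj
        (eq_or_lineGraph_adj (some_mem_spoke 1) (by simpa using right_mem_rim (0 : ZMod m)))
    · exact (to_spoke i (hS i hi)).trans <| reachable_induce_of_eq_or_adj
        (eq_or_lineGraph_adj (some_mem_spoke i) (left_mem_rim i))

variable (m) in
def lineDomSet : Finset (wheelGraph m).edgeSet :=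
  insert (spoke m 0) ((Finset.range (m / 3)).image fun j : ℕ => rim m (3 * j + 2))

lemma isDomSet_lineDomSet : IsDomSet (wheelGraph m).lineGraph (lineDomSet m : Set _) := by
  have dom : ∀ {u e : (wheelGraph m).edgeSet} {v}, u ∈ lineDomSet m →
      v ∈ (u : Sym2 (Option (ZMod m))) → v ∈ (e : Sym2 (Option (ZMod m))) →
      ∃ u ∈ (lineDomSet m : Set _), u = e ∨ (wheelGraph m).lineGraph.Adj u e :=
    fun hu hv he => ⟨_, hu, eq_or_lineGraph_adj hv he⟩
  have spoke_mem : spoke m 0 ∈ lineDomSet m := Finset.mem_insert_self _ _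
  have rim_mem : ∀ j < m / 3, rim m (3 * j + 2) ∈ lineDomSet m := fun j hj =>
    Finset.mem_insert_of_mem (Finset.mem_image_of_mem _ (Finset.mem_range.mpr hj))
  intro e
  rcases spoke_or_rim e with ⟨i, rfl⟩ | ⟨i, rfl⟩
  · exact dom spoke_mem (none_mem_spoke 0) (none_mem_spoke i)
  obtain ⟨k, hk, rfl⟩ : ∃ k < m, (k : ZMod m) = i :=
    ⟨i.val, ZMod.val_lt i, ZMod.natCast_zmod_val i⟩
  by_cases hk0 : k = 0
  · subst hk0
    exact dom spoke_mem (some_mem_spoke 0) (by simp)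
  by_cases hkm : k + 1 = m
  · have : (k : ZMod m) + 1 = 0 := by rw [← Nat.cast_add_one, hkm, ZMod.natCast_self]
    exact dom spoke_mem (some_mem_spoke 0) (this ▸ right_mem_rim (k : ZMod m))
  obtain ⟨j, hj, hkj⟩ : ∃ j < m / 3, k = 3 * j + 1 ∨ k = 3 * j + 2 ∨ k = 3 * j + 3 :=
    ⟨(k - 1) / 3, by omega, by omega⟩
  rcases hkj with rfl | rfl | rfl
  · have : ((3 * j + 1 : ℕ) : ZMod m) + 1 = 3 * j + 2 := by push_cast; ring
    exact dom (rim_mem j hj) (left_mem_rim _) (this ▸ right_mem_rim _)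
  · exact dom (rim_mem j hj) (left_mem_rim _) (by simp)
  · have : (3 * j + 2 : ZMod m) + 1 = ((3 * j + 3 : ℕ) : ZMod m) := by push_cast; ring
    exact dom (rim_mem j hj) (this ▸ right_mem_rim _) (left_mem_rim _)

lemma connected_induce_compl_lineDomSet :
    ((wheelGraph m).lineGraph.induce (lineDomSet m : Set _)ᶜ).Connected := by
  refine connected_induce_compl fun i hi hmem => ?_
  rcases Finset.mem_insert.mp hmem with h | h
  · exact hi (spoke_injective h)
  · obtain ⟨j, -, hj⟩ := Finset.mem_image.mp h
    exact spoke_ne_rim i _ hj.symm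

lemma card_lineDomSet_le : (lineDomSet m).card ≤ m / 3 + 1 :=
  (Finset.card_insert_le _ _).trans (by grw [Finset.card_image_le, Finset.card_range])

variable (m) in
lemma outConnDomNum_lineGraph_le : outConnDomNum (wheelGraph m).lineGraph ≤ m / 3 + 1 := by
  grw [outConnDomNum_le_s18 isDomSet_lineDomSet connected_induce_compl_lineDomSet,
    Set.ncard_coe_finset, card_lineDomSet_le]

end WheelGraph

theorem stmt18 (n : ℕ) (h5 : 5 ≤ n) :
    outConnDomNum (wheelGraph (n - 1)).lineGraph <
      outConnDomNum (middleGraph (wheelGraph (n - 1))) := by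
  have : Fact (1 < n - 1) := ⟨by omega⟩
  have hline := WheelGraph.outConnDomNum_lineGraph_le (n - 1)
  have hmiddle := natCard_le_two_mul_outConnDomNum_middleGraph (G := wheelGraph (n - 1))
    (x := none) (y := some 0) trivial
  rw [Finite.card_option, Nat.card_zmod] at hmiddle
  omega
end
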